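/- arXiv:2108.04711 — 2 statements merged into one kernel-verified Lean document; each statement's English description precedes it below -/
import Mathlib

section
/- Every divisor of degree g on a finite connected multigraph G of genus g (with all vertex weights zero) is linearly equivalent to a break divisor. -/
open scoped Classical

/-- A finite multigraph with legs: oriented edges with source `s` and target `t`,
legs rooted at vertices, and a vertex-weight (genus) function `w`. -/
structure MGraph where
  V : Type
  E : Type
  L : Type
  [fV : Fintype V]
  [fE : Fintype E]
  [fL : Fintype L]
  s : E → V
  t : E → V
  legRoot : L → V
  w : V → ℕ

attribute [instance] MGraph.fV MGraph.fE MGraph.fL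

namespace MGraph

variable (G : MGraph)

/-- Adjacency via some edge. -/
def Adj (v u : G.V) : Prop :=
  ∃ e : G.E, (G.s e = v ∧ G.t e = u) ∨ (G.s e = u ∧ G.t e = v)

/-- Connectedness of the graph. -/
def Connected : Prop :=
  Nonempty G.V ∧ ∀ v u : G.V, Relation.ReflTransGen G.Adj v u

/-- Number of edge-flags (half-edges) at a vertex; a loop contributes 2. -/
noncomputable def valE (v : G.V) : ℕ :=
  ∑ e : G.E, ((if G.s e = v then 1 else 0) + (if G.t e = v then 1 else 0))

/-- Number of legs rooted at a vertex. -/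
noncomputable def nLegs (v : G.V) : ℕ :=
  (Finset.univ.filter fun l : G.L => G.legRoot l = v).card

/-- Valence of a vertex: half-edges plus legs rooted at it. -/
noncomputable def val (v : G.V) : ℕ := G.valE v + G.nLegs v

/-- Genus `g(G) = b₁(G) + Σ_v w(v)` with `b₁(G) = |E| - |V| + 1`. -/
noncomputable def genus : ℤ :=
  (Fintype.card G.E : ℤ) - (Fintype.card G.V : ℤ) + 1 + ∑ v : G.V, (G.w v : ℤ)

/-- Exceptional vertex: weight 0 and valence 2. -/
def Exc (v : G.V) : Prop := G.w v = 0 ∧ G.val v = 2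

/-- Quasi-stable graph of type `(g,n)`. -/
def QuasiStable (g n : ℕ) : Prop :=
  G.Connected ∧ G.genus = (g : ℤ) ∧ Fintype.card G.L = n ∧
  (∀ v, G.w v = 0 → 2 ≤ G.val v) ∧
  (∀ v, G.Exc v → (∀ l : G.L, G.legRoot l ≠ v) ∧ (∀ e : G.E, G.s e = v → G.t e ≠ v)) ∧
  (∀ v u, G.Exc v → G.Exc u → v ≠ u → ¬ G.Adj v u)

/-- Stable graph of type `(g,n)`. -/
def Stable (g n : ℕ) : Prop :=
  G.Connected ∧ G.genus = (g : ℤ) ∧ Fintype.card G.L = n ∧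
  ∀ v, 0 < 2 * (G.w v : ℤ) - 2 + (G.val v : ℤ)

/-- The set `E(S, Sᶜ)` of edges joining `S` to its complement. -/
noncomputable def cut (S : Finset G.V) : Finset G.E :=
  Finset.univ.filter fun e =>
    (G.s e ∈ S ∧ G.t e ∉ S) ∨ (G.t e ∈ S ∧ G.s e ∉ S)

/-- A divisor is admissible if it takes value 1 at every exceptional vertex. -/
def Admissible (D : G.V → ℤ) : Prop := ∀ v, G.Exc v → D v = 1

/-- Degree of a divisor. -/
noncomputable def degD (D : G.V → ℤ) : ℤ := ∑ v : G.V, D v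

/-- `D(S) = Σ_{v∈S} D(v)`. -/
noncomputable def divSum (D : G.V → ℤ) (S : Finset G.V) : ℤ := ∑ v ∈ S, D v

/-- `φ(S) = Σ_{v∈S} φ(v)`. -/
noncomputable def phiSum (φ : G.V → ℝ) (S : Finset G.V) : ℝ := ∑ v ∈ S, φ v

/-- `φ`-semistability of an admissible divisor. -/
def Semistable (φ : G.V → ℝ) (D : G.V → ℤ) : Prop :=
  G.Admissible D ∧ (G.degD D : ℝ) = ∑ v : G.V, φ v ∧
  ∀ S : Finset G.V,
    G.phiSum φ S - ((G.cut S).card : ℝ) / 2 ≤ (G.divSum D S : ℝ) ∧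
    (G.divSum D S : ℝ) ≤ G.phiSum φ S + ((G.cut S).card : ℝ) / 2

end MGraph

namespace MGraph

variable (G : MGraph)

/-- Adjacency using only edges in `T`. -/
def AdjIn (T : Finset G.E) (v u : G.V) : Prop :=
  ∃ e ∈ T, (G.s e = v ∧ G.t e = u) ∨ (G.s e = u ∧ G.t e = v)

/-- `T` is a spanning tree: it connects all vertices and `|T| = |V| - 1`. -/
def IsSpanningTree (T : Finset G.E) : Prop :=
  (∀ v u : G.V, Relation.ReflTransGen (G.AdjIn T) v u) ∧ T.card + 1 = Fintype.card G.V

/-- `D` is a break divisor: `D = Σ_v h(v)·v + Σ_{e∉T} φ(e)` for a spanning tree `T`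
and a choice `φ(e)` of an endpoint of each non-tree edge `e`. -/
def IsBreakDivisor (D : G.V → ℤ) : Prop :=
  ∃ (T : Finset G.E) (φ : G.E → G.V), G.IsSpanningTree T ∧
    (∀ e ∉ T, φ e = G.s e ∨ φ e = G.t e) ∧
    ∀ v : G.V, D v = (G.w v : ℤ) + (((Finset.univ \ T).filter fun e => φ e = v).card : ℤ)

end MGraph

/-- The graph Laplacian `Δf(v) = Σ_{e=vw} (f(v) - f(w))`. -/
noncomputable def MGraph.lap (G : MGraph) (f : G.V → ℤ) (v : G.V) : ℤ :=
  ∑ e : G.E, ((if G.s e = v then f (G.s e) - f (G.t e) else 0) +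
              (if G.t e = v then f (G.t e) - f (G.s e) else 0))

/-!
Write `exc_D(S) = D(S) - g(S)`, where `g(S) = |E(S)| - |S| + 1` is the genus of the subgraph
induced on `S`. Firing the largest proper set `X` of least negative excess never lowers the least
excess, and the sets still attaining it lie strictly inside `X`; so some `D - Δf` has
`exc ≥ 0` on every nonempty set. Such a divisor is a break divisor by a Hall-type induction:
at a vertex `v` with `D(v) > 0` the smallest tight set through `v` contains an edge at `v`;
deleting that edge, oriented towards `v`, and removing the chip it carries preserves
`exc ≥ 0`. When no chips are left, the remaining edges form a spanning tree, since a set closed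
under them and its complement would have total excess `-1`.
-/

namespace MGraph

open Finset

variable {G : MGraph}

lemma sum_lap_eq (f : G.V → ℤ) (S : Finset G.V) :
    ∑ v ∈ S, G.lap f v = ∑ e, (f (G.s e) - f (G.t e)) *
      ((if G.s e ∈ S then 1 else 0) - if G.t e ∈ S then 1 else 0) := by
  unfold lap
  rw [sum_comm]
  refine sum_congr rfl fun e _ => ?_
  rw [sum_add_distrib, sum_ite_eq, sum_ite_eq]
  split_ifs <;> ring

lemma sum_lap_univ (f : G.V → ℤ) : ∑ v, G.lap f v = 0 := by
  simp [sum_lap_eq]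

lemma lap_sub (f f' : G.V → ℤ) (v : G.V) :
    G.lap (f - f') v = G.lap f v - G.lap f' v := by
  simp only [lap, ← sum_sub_distrib, Pi.sub_apply]
  refine sum_congr rfl fun e _ => ?_
  split_ifs <;> ring

variable (G) in
noncomputable def numEdgesIn (A : Finset G.E) (S : Finset G.V) : ℤ :=
  ∑ e ∈ A, if G.s e ∈ S ∧ G.t e ∈ S then 1 else 0

variable (G) in
noncomputable def numEdgesBetween (Y Z : Finset G.V) : ℤ :=
  ∑ e, if (G.s e ∈ Y ∧ G.t e ∈ Z) ∨ (G.s e ∈ Z ∧ G.t e ∈ Y) then 1 else 0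

variable (G) in
/-- `D(S) - g(S)`, where `g(S) = |E_A(S)| - |S| + 1` is the genus of the subgraph induced
on `S` by the edges of `A`. -/
noncomputable def excess (A : Finset G.E) (D : G.V → ℤ) (S : Finset G.V) : ℤ :=
  ∑ v ∈ S, D v - G.numEdgesIn A S + #S - 1

@[simp]
lemma excess_empty (A : Finset G.E) (D : G.V → ℤ) : G.excess A D ∅ = -1 := by
  simp [excess, numEdgesIn]

lemma numEdgesIn_univ (A : Finset G.E) : G.numEdgesIn A univ = #A := by
  simp [numEdgesIn]

lemma numEdgesIn_nonneg (A : Finset G.E) (S : Finset G.V) : 0 ≤ G.numEdgesIn A S :=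
  sum_nonneg fun _ _ => by split_ifs <;> norm_num

lemma numEdgesBetween_nonneg (Y Z : Finset G.V) : 0 ≤ G.numEdgesBetween Y Z :=
  sum_nonneg fun _ _ => by split_ifs <;> norm_num

lemma excess_union_add_excess_inter_le (A : Finset G.E) (D : G.V → ℤ) (S S' : Finset G.V) :
    G.excess A D (S ∪ S') + G.excess A D (S ∩ S') ≤ G.excess A D S + G.excess A D S' := by
  have hsum := sum_union_inter (s₁ := S) (s₂ := S') (f := D)
  have hcard : (#(S ∪ S') : ℤ) + #(S ∩ S') = #S + #S' := by
    exact_mod_cast card_union_add_card_inter S S'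
  have hedges : G.numEdgesIn A S + G.numEdgesIn A S' ≤
      G.numEdgesIn A (S ∪ S') + G.numEdgesIn A (S ∩ S') := by
    simp only [numEdgesIn, ← sum_add_distrib]
    refine sum_le_sum fun e _ => ?_
    by_cases h1 : G.s e ∈ S <;> by_cases h2 : G.s e ∈ S' <;>
      by_cases h3 : G.t e ∈ S <;> by_cases h4 : G.t e ∈ S' <;> simp [h1, h2, h3, h4]
  unfold excess
  linarith

lemma excess_add_lap_add_excess (D : G.V → ℤ) (X S : Finset G.V) :
    G.excess univ (D + G.lap fun v => if v ∈ X then 1 else 0) S + G.excess univ D X =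
      G.excess univ D (S ∪ X) + G.excess univ D (S ∩ X) +
        G.numEdgesBetween (S ∩ X) (S ∪ X)ᶜ := by
  have hsum := sum_union_inter (s₁ := S) (s₂ := X) (f := D)
  have hcard : (#(S ∪ X) : ℤ) + #(S ∩ X) = #S + #X := by
    exact_mod_cast card_union_add_card_inter S X
  have hedges : ∑ v ∈ S, G.lap (fun v => if v ∈ X then 1 else 0) v =
      G.numEdgesIn univ S + G.numEdgesIn univ X - G.numEdgesIn univ (S ∪ X) -
        G.numEdgesIn univ (S ∩ X) + G.numEdgesBetween (S ∩ X) (S ∪ X)ᶜ := by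
    simp only [sum_lap_eq, numEdgesIn, numEdgesBetween, ← sum_add_distrib, ← sum_sub_distrib]
    refine sum_congr rfl fun e _ => ?_
    by_cases h1 : G.s e ∈ S <;> by_cases h2 : G.s e ∈ X <;>
      by_cases h3 : G.t e ∈ S <;> by_cases h4 : G.t e ∈ X <;> simp [h1, h2, h3, h4]
  simp only [excess, Pi.add_apply, sum_add_distrib]
  linarith

lemma Connected.one_le_numEdgesBetween_compl (hconn : G.Connected) {X : Finset G.V}
    (hne : X.Nonempty) (hX : X ≠ univ) : 1 ≤ G.numEdgesBetween X Xᶜ := by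
  obtain ⟨v, hv⟩ := hne
  obtain ⟨u, hu⟩ : ∃ u, u ∉ X := by simpa [eq_univ_iff_forall] using hX
  obtain ⟨e, he⟩ : ∃ e, (G.s e ∈ X ∧ G.t e ∈ Xᶜ) ∨ (G.s e ∈ Xᶜ ∧ G.t e ∈ X) := by
    by_contra! hcut
    refine hu (Relation.ReflTransGen.rec hv (fun _ ⟨e, he⟩ hw => ?_) (hconn.2 v u))
    rcases he with ⟨rfl, rfl⟩ | ⟨rfl, rfl⟩
    · by_contra ht; exact ((hcut e).1 hw) (mem_compl.2 ht)
    · by_contra ht; exact ((hcut e).2 (mem_compl.2 ht)) hw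
  calc (1 : ℤ) = if (G.s e ∈ X ∧ G.t e ∈ Xᶜ) ∨ (G.s e ∈ Xᶜ ∧ G.t e ∈ X) then 1 else 0 :=
        (if_pos he).symm
    _ ≤ G.numEdgesBetween X Xᶜ :=
        single_le_sum (f := fun e => if (G.s e ∈ X ∧ G.t e ∈ Xᶜ) ∨ (G.s e ∈ Xᶜ ∧ G.t e ∈ X)
          then (1 : ℤ) else 0) (fun e _ => by split_ifs <;> norm_num) (mem_univ e)

variable (G) in
structure IsFiringSet (b : G.V → ℤ) (X : Finset G.V) : Prop where
  nonempty : X.Nonempty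
  ne_univ : X ≠ univ
  excess_neg : G.excess univ b X < 0
  excess_le : ∀ S : Finset G.V, S.Nonempty → S ≠ univ → G.excess univ b X ≤ G.excess univ b S
  card_le : ∀ S : Finset G.V, S.Nonempty → S ≠ univ →
    G.excess univ b S = G.excess univ b X → #S ≤ #X

lemma exists_isFiringSet {b : G.V → ℤ} {S : Finset G.V} (hne : S.Nonempty) (hS : S ≠ univ)
    (hneg : G.excess univ b S < 0) : ∃ X, G.IsFiringSet b X := by
  obtain ⟨X, hX, hmin⟩ := exists_min_image (univ.filter fun S : Finset G.V => S.Nonempty ∧ S ≠ univ)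
    (fun S => toLex (G.excess univ b S, -(#S : ℤ))) ⟨S, by simp [hne, hS]⟩
  simp only [mem_filter, mem_univ, true_and, and_imp] at hX hmin
  have hle : ∀ S : Finset G.V, S.Nonempty → S ≠ univ → G.excess univ b X ≤ G.excess univ b S ∧
      (G.excess univ b S = G.excess univ b X → #S ≤ #X) := by
    intro S hne hS
    rcases Prod.Lex.toLex_le_toLex.1 (hmin S hne hS) with hlt | ⟨heq, hcard⟩
    · exact ⟨hlt.le, fun h => absurd h hlt.ne'⟩
    · exact ⟨heq.le, fun _ => by omega⟩
  exact ⟨X, hX.1, hX.2, lt_of_le_of_lt (hle S hne hS).1 hneg, fun S hne hS => (hle S hne hS).1,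
    fun S hne hS => (hle S hne hS).2⟩

lemma IsFiringSet.excess_fire (hconn : G.Connected) {b : G.V → ℤ} {X : Finset G.V}
    (hX : G.IsFiringSet b X) (huniv : G.excess univ b univ = 0) {S : Finset G.V}
    (hne : S.Nonempty) (hS : S ≠ univ) :
    G.excess univ b X ≤ G.excess univ (b + G.lap fun v => if v ∈ X then 1 else 0) S ∧
      (G.excess univ (b + G.lap fun v => if v ∈ X then 1 else 0) S = G.excess univ b X →
        S ⊂ X) := by
  have hunion : G.excess univ b X ≤ G.excess univ b (S ∪ X) ∧
      (G.excess univ b (S ∪ X) = G.excess univ b X → S ⊆ X) := by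
    by_cases hU : S ∪ X = univ
    · rw [hU, huniv]
      exact ⟨hX.excess_neg.le, fun h => absurd h hX.excess_neg.ne'⟩
    · have hUne : (S ∪ X).Nonempty := hne.mono subset_union_left
      refine ⟨hX.excess_le _ hUne hU, fun h => ?_⟩
      have := eq_of_subset_of_card_le subset_union_right (hX.card_le _ hUne hU h)
      exact union_eq_right.1 this.symm
  have hinter : G.excess univ b X ≤ G.excess univ b (S ∩ X) := by
    rcases (S ∩ X).eq_empty_or_nonempty with hI | hI
    · rw [hI, excess_empty]; linarith [hX.excess_neg]
    · exact hX.excess_le _ hI fun h => hX.ne_univ (univ_subset_iff.1 (h ▸ inter_subset_right))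
  have hid := excess_add_lap_add_excess b X S
  have hcross := numEdgesBetween_nonneg (G := G) (S ∩ X) (S ∪ X)ᶜ
  refine ⟨by linarith [hunion.1], fun heq => ?_⟩
  have hSX : S ⊆ X := hunion.2 (by linarith [hunion.1])
  refine Finset.ssubset_iff_subset_ne.2 ⟨hSX, ?_⟩
  rintro rfl
  have := hconn.one_le_numEdgesBetween_compl hne hS
  simp only [inter_self, union_self] at hid
  linarith

lemma excess_sub_lap_univ (A : Finset G.E) (D f : G.V → ℤ) :
    G.excess A (D - G.lap f) univ = G.excess A D univ := by
  simp [excess, sum_sub_distrib, sum_lap_univ]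

theorem Connected.exists_excess_sub_lap_nonneg (hconn : G.Connected) {D : G.V → ℤ}
    (hD : G.excess univ D univ = 0) :
    ∃ f : G.V → ℤ, ∀ S : Finset G.V, S.Nonempty → 0 ≤ G.excess univ (D - G.lap f) S := by
  have firingSet_of_neg : ∀ f, (¬ ∀ S : Finset G.V, S.Nonempty →
      0 ≤ G.excess univ (D - G.lap f) S) → ∃ X, G.IsFiringSet (D - G.lap f) X := by
    intro f hbad
    push Not at hbad
    obtain ⟨S, hne, hneg⟩ := hbad
    refine exists_isFiringSet hne (fun hS => ?_) hneg
    rw [hS, excess_sub_lap_univ, hD] at hneg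
    exact lt_irrefl _ hneg
  suffices descent : ∀ (p : ℕ ×ₗ ℕ) (f : G.V → ℤ) (X : Finset G.V),
      G.IsFiringSet (D - G.lap f) X →
      toLex ((-G.excess univ (D - G.lap f) X).toNat, #X) = p →
      ∃ f : G.V → ℤ, ∀ S : Finset G.V, S.Nonempty → 0 ≤ G.excess univ (D - G.lap f) S by
    by_cases hgood : ∀ S : Finset G.V, S.Nonempty → 0 ≤ G.excess univ (D - G.lap 0) S
    · exact ⟨0, hgood⟩
    · obtain ⟨X, hX⟩ := firingSet_of_neg 0 hgood
      exact descent _ 0 X hX rfl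
  intro p
  induction p using WellFoundedLT.induction with
  | _ p ih =>
  rintro f X hX rfl
  set f' : G.V → ℤ := f - fun v => if v ∈ X then 1 else 0
  have hfire : D - G.lap f' = (D - G.lap f) + G.lap fun v => if v ∈ X then 1 else 0 := by
    funext v
    simp only [f', Pi.sub_apply, Pi.add_apply, lap_sub]
    ring
  by_cases hgood : ∀ S : Finset G.V, S.Nonempty → 0 ≤ G.excess univ (D - G.lap f') S
  · exact ⟨f', hgood⟩
  obtain ⟨X', hX'⟩ := firingSet_of_neg f' hgood
  refine ih _ ?_ f' X' hX' rfl
  have hneg := hX'.excess_neg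
  rw [hfire] at hneg ⊢
  have hkey := hX.excess_fire hconn (by rw [excess_sub_lap_univ, hD]) hX'.nonempty hX'.ne_univ
  rw [Prod.Lex.toLex_lt_toLex]
  rcases hkey.1.lt_or_eq with hlt | heq
  · left; omega
  · right; exact ⟨by rw [heq], card_lt_card (hkey.2 heq.symm)⟩

section Orientation

variable {A : Finset G.E} {b : G.V → ℤ}

lemma neg_one_le_excess (hexc : ∀ S : Finset G.V, S.Nonempty → 0 ≤ G.excess A b S)
    (S : Finset G.V) : -1 ≤ G.excess A b S := by
  rcases S.eq_empty_or_nonempty with rfl | hne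
  · simp
  · linarith [hexc S hne]

lemma nonneg_of_excess_nonneg (hexc : ∀ S : Finset G.V, S.Nonempty → 0 ≤ G.excess A b S)
    (v : G.V) : 0 ≤ b v := by
  have := hexc {v} (singleton_nonempty v)
  simp only [excess, sum_singleton, card_singleton, Nat.cast_one] at this
  linarith [numEdgesIn_nonneg A {v}]

lemma excess_erase_sub_single {e : G.E} (he : e ∈ A) (v : G.V) (S : Finset G.V) :
    G.excess (A.erase e) (b - Pi.single v 1) S = G.excess A b S - (if v ∈ S then 1 else 0) +
      if G.s e ∈ S ∧ G.t e ∈ S then 1 else 0 := by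
  simp only [excess, numEdgesIn, sum_erase_eq_sub he, Pi.sub_apply, sum_sub_distrib,
    sum_pi_single']
  ring

lemma reflTransGen_adjIn_of_excess (hexc : ∀ S : Finset G.V, S.Nonempty → 0 ≤ G.excess A b S)
    (htot : G.excess A b univ = 0) (v u : G.V) : Relation.ReflTransGen (G.AdjIn A) v u := by
  set C := univ.filter (Relation.ReflTransGen (G.AdjIn A) v)
  have hvC : v ∈ C := mem_filter.2 ⟨mem_univ v, .refl⟩
  have hclosed : ∀ e ∈ A, G.s e ∈ C ↔ G.t e ∈ C := by
    intro e he
    simp only [C, mem_filter, mem_univ, true_and]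
    exact ⟨fun h => h.tail ⟨e, he, Or.inl ⟨rfl, rfl⟩⟩,
      fun h => h.tail ⟨e, he, Or.inr ⟨rfl, rfl⟩⟩⟩
  have hsplit : G.numEdgesIn A C + G.numEdgesIn A Cᶜ = #A := by
    simp only [numEdgesIn, ← sum_add_distrib, card_eq_sum_ones, Nat.cast_sum, Nat.cast_one]
    refine sum_congr rfl fun e he => ?_
    by_cases hs : G.s e ∈ C <;> simp [hs, (hclosed e he).symm]
  have hcompl : G.excess A b C + G.excess A b Cᶜ = -1 := by
    have hsum := sum_add_sum_compl C b
    have hcard : (#C : ℤ) + #Cᶜ = Fintype.card G.V := by exact_mod_cast card_add_card_compl C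
    simp only [excess, numEdgesIn_univ, card_univ] at htot ⊢
    linarith
  by_contra hu
  have huC : u ∈ Cᶜ := by simpa [C] using hu
  linarith [hexc C ⟨v, hvC⟩, hexc Cᶜ ⟨u, huC⟩]

/-- Removing `v` from the least tight set through `v` would drop its excess below `-1` unless
that set contains an edge at `v`. -/
lemma exists_edge_mem_of_excess_eq_zero
    (hexc : ∀ S : Finset G.V, S.Nonempty → 0 ≤ G.excess A b S)
    (htot : G.excess A b univ = 0) {v : G.V} (hv : 1 ≤ b v) :
    ∃ e ∈ A, (G.s e = v ∨ G.t e = v) ∧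
      ∀ S : Finset G.V, G.excess A b S = 0 → v ∈ S → G.s e ∈ S ∧ G.t e ∈ S := by
  obtain ⟨S₀, hS₀, hmin⟩ := exists_min_image
    (univ.filter fun S : Finset G.V => G.excess A b S = 0 ∧ v ∈ S) card ⟨univ, by simp [htot]⟩
  simp only [mem_filter, mem_univ, true_and, and_imp] at hS₀ hmin
  have hleast : ∀ S : Finset G.V, G.excess A b S = 0 → v ∈ S → S₀ ⊆ S := by
    intro S hS hvS
    have htight : G.excess A b (S₀ ∩ S) = 0 := by
      linarith [excess_union_add_excess_inter_le A b S₀ S,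
        hexc (S₀ ∪ S) ⟨v, mem_union_right _ hvS⟩, hexc (S₀ ∩ S) ⟨v, mem_inter.2 ⟨hS₀.2, hvS⟩⟩]
    have := eq_of_subset_of_card_le inter_subset_left
      (hmin _ htight (mem_inter.2 ⟨hS₀.2, hvS⟩))
    exact this ▸ inter_subset_right
  by_contra! hnone
  have hedges : G.numEdgesIn A (S₀.erase v) = G.numEdgesIn A S₀ := by
    refine sum_congr rfl fun e he => ?_
    by_cases hin : G.s e ∈ S₀ ∧ G.t e ∈ S₀
    · have hne : ¬ (G.s e = v ∨ G.t e = v) := fun hev => by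
        obtain ⟨S, hS, hvS, hout⟩ := hnone e he hev
        exact hout (hleast S hS hvS hin.1) (hleast S hS hvS hin.2)
      push Not at hne
      simp [hin, hne]
    · have : ¬ (G.s e ∈ S₀.erase v ∧ G.t e ∈ S₀.erase v) := fun h =>
        hin ⟨mem_of_mem_erase h.1, mem_of_mem_erase h.2⟩
      simp only [if_neg hin, if_neg this]
  have hdrop : G.excess A b (S₀.erase v) = G.excess A b S₀ - b v - 1 := by
    simp only [excess, hedges, sum_erase_eq_sub hS₀.2, card_erase_of_mem hS₀.2]
    have : 1 ≤ #S₀ := card_pos.2 ⟨v, hS₀.2⟩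
    push_cast [this]
    ring
  linarith [neg_one_le_excess hexc (S₀.erase v), hS₀.1]

lemma excess_erase_sub_single_nonneg
    (hexc : ∀ S : Finset G.V, S.Nonempty → 0 ≤ G.excess A b S) {e : G.E} (he : e ∈ A)
    {v : G.V} (hgood : ∀ S : Finset G.V, G.excess A b S = 0 → v ∈ S → G.s e ∈ S ∧ G.t e ∈ S)
    (S : Finset G.V) (hne : S.Nonempty) : 0 ≤ G.excess (A.erase e) (b - Pi.single v 1) S := by
  rw [excess_erase_sub_single he]
  have := hexc S hne
  by_cases hvS : v ∈ S
  · by_cases hin : G.s e ∈ S ∧ G.t e ∈ S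
    · simp only [if_pos hvS, if_pos hin]; linarith
    · have : G.excess A b S ≠ 0 := fun h => hin (hgood S h hvS)
      simp only [if_pos hvS, if_neg hin]; omega
  · simp only [if_neg hvS]; split_ifs <;> linarith

end Orientation

lemma card_filter_insert_update {α β : Type*} {s : Finset α}
    {a : α} (ha : a ∉ s) (f : α → β) (b c : β) :
    #((insert a s).filter fun x => Function.update f a b x = c) =
      #(s.filter fun x => f x = c) + if b = c then 1 else 0 := by
  have hfilter : s.filter (fun x => Function.update f a b x = c) = s.filter fun x => f x = c :=
    filter_congr fun x hx => by rw [Function.update_of_ne (ne_of_mem_of_not_mem hx ha)]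
  rw [filter_insert, Function.update_self, hfilter]
  split_ifs
  · exact card_insert_of_notMem fun hm => ha (mem_filter.1 hm).1
  · rfl

theorem exists_spanningTree_orientation (A : Finset G.E) (b : G.V → ℤ)
    (hexc : ∀ S : Finset G.V, S.Nonempty → 0 ≤ G.excess A b S)
    (htot : G.excess A b univ = 0) :
    ∃ T ⊆ A, G.IsSpanningTree T ∧ ∃ ψ : G.E → G.V,
      (∀ e ∈ A \ T, ψ e = G.s e ∨ ψ e = G.t e) ∧
      ∀ v, b v = #((A \ T).filter fun e => ψ e = v) := by
  induction A using Finset.strongInduction generalizing b with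
  | H A ih =>
  by_cases hzero : ∀ v, b v = 0
  · have hcard : #A + 1 = Fintype.card G.V := by
      simp only [excess, hzero, sum_const_zero, numEdgesIn_univ, card_univ] at htot
      omega
    exact ⟨A, subset_rfl, ⟨reflTransGen_adjIn_of_excess hexc htot, hcard⟩, G.s,
      by simp, by simp [hzero]⟩
  push Not at hzero
  obtain ⟨v, hv⟩ := hzero
  have hbv : 1 ≤ b v := by have := nonneg_of_excess_nonneg hexc v; omega
  obtain ⟨e, heA, hev, hgood⟩ := exists_edge_mem_of_excess_eq_zero hexc htot hbv
  have hexc' := excess_erase_sub_single_nonneg hexc heA hgood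
  have htot' : G.excess (A.erase e) (b - Pi.single v 1) univ = 0 := by
    simp [excess_erase_sub_single heA, htot]
  obtain ⟨T, hTA, hT, ψ, hψ, hcount⟩ := ih _ (erase_ssubset heA) _ hexc' htot'
  have heT : e ∉ A.erase e \ T := fun h => notMem_erase e A (mem_sdiff.1 h).1
  have heT' : e ∉ T := fun h => notMem_erase e A (hTA h)
  have hsplit : A \ T = insert e (A.erase e \ T) := by
    ext x
    by_cases hx : x = e
    · subst hx; simp [heA, heT']
    · simp [hx]
  refine ⟨T, hTA.trans (erase_subset e A), hT, Function.update ψ e v, ?_, ?_⟩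
  · intro x hx
    rw [hsplit, mem_insert] at hx
    rcases hx with rfl | hx
    · simpa [eq_comm] using hev
    · rw [Function.update_of_ne (ne_of_mem_of_not_mem hx heT)]
      exact hψ x hx
  · intro w
    have hw := hcount w
    rw [Pi.sub_apply, Pi.single_apply] at hw
    rw [hsplit, card_filter_insert_update heT]
    by_cases h : w = v
    · simp only [h, if_true] at hw ⊢
      push_cast
      omega
    · simp only [h, Ne.symm h, if_false] at hw ⊢
      omega

end MGraph

/-- Every divisor of degree `g` on a finite connected multigraph of genus `g`
(with all vertex weights zero) is linearly equivalent to a break divisor. -/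
theorem stmt12 (g : ℤ) (G : MGraph) (hw : ∀ v, G.w v = 0)
    (hconn : G.Connected) (hgen : G.genus = g)
    (D : G.V → ℤ) (hdeg : G.degD D = g) :
    ∃ f : G.V → ℤ, G.IsBreakDivisor (fun v => D v - G.lap f v) := by
  have hD : G.excess Finset.univ D Finset.univ = 0 := by
    simp only [MGraph.genus, hw, CharP.cast_eq_zero, Finset.sum_const_zero, add_zero] at hgen
    rw [MGraph.degD] at hdeg
    simp only [MGraph.excess, MGraph.numEdgesIn_univ, Finset.card_univ]
    linarith
  obtain ⟨f, hf⟩ := hconn.exists_excess_sub_lap_nonneg hD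
  obtain ⟨T, -, hT, φ, hφ, hcount⟩ := MGraph.exists_spanningTree_orientation Finset.univ
    (D - G.lap f) hf (by rw [MGraph.excess_sub_lap_univ, hD])
  exact ⟨f, T, φ, hT, fun e he => hφ e (by simpa using he), fun v => by simpa [hw] using hcount v⟩
end

section
/- Let G be a connected multigraph of genus g = b₁(G) (all vertex weights 0, no legs, viewed as a quasi-stable graph of type (g,0) with no exceptional vertices, g ≥ 2). Define φ^can(v) = g·(val(v) - 2)/(2g - 2) for v ∈ V(G). Then every break divisor D on G is φ^can-semistable: for every S ⊆ V(G), D(S) ≤ φ^can(S) + |E(S,S^c)|/2. -/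
open scoped Classical

section Aux

variable (G : MGraph)

lemma aux_crossing (T : Finset G.E) (S : Finset G.V) :
    ∀ {a b : G.V}, Relation.ReflTransGen (G.AdjIn T) a b → a ∈ S → b ∉ S →
      ∃ e ∈ T, (G.s e ∈ S ∧ G.t e ∉ S) ∨ (G.t e ∈ S ∧ G.s e ∉ S) := by
  intro a b h
  induction h with
  | refl => intro ha hb; exact absurd ha hb
  | @tail b c h1 h2 ih =>
    intro ha hc
    by_cases hb : b ∈ S
    · obtain ⟨e, heT, he⟩ := h2
      refine ⟨e, heT, ?_⟩
      rcases he with ⟨hs, ht⟩ | ⟨hs, ht⟩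
      · exact Or.inl ⟨by rw [hs]; exact hb, by rw [ht]; exact hc⟩
      · exact Or.inr ⟨by rw [ht]; exact hb, by rw [hs]; exact hc⟩
    · exact ih ha hb

lemma aux_step (T : Finset G.E) (S : Finset G.V)
    (e₀ : G.E) (he₀T : e₀ ∈ T) (v₀ : G.V) (hv₀ : v₀ ∈ S)
    (hep : G.s e₀ = v₀ ∨ G.t e₀ = v₀)
    (hs' : G.s e₀ ∉ S.erase v₀) (ht' : G.t e₀ ∉ S.erase v₀)
    (hprev : (S.erase v₀).card ≤
      (T.filter fun e => G.s e ∈ S.erase v₀ ∨ G.t e ∈ S.erase v₀).card) :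
    S.card ≤ (T.filter fun e => G.s e ∈ S ∨ G.t e ∈ S).card := by
  have h1 : e₀ ∉ T.filter (fun e => G.s e ∈ S.erase v₀ ∨ G.t e ∈ S.erase v₀) := by
    intro h
    rcases (Finset.mem_filter.mp h).2 with h2 | h2
    · exact hs' h2
    · exact ht' h2
  have h2 : insert e₀ (T.filter fun e => G.s e ∈ S.erase v₀ ∨ G.t e ∈ S.erase v₀) ⊆
      T.filter fun e => G.s e ∈ S ∨ G.t e ∈ S := by
    intro e he
    rcases Finset.mem_insert.mp he with rfl | he
    · refine Finset.mem_filter.mpr ⟨he₀T, ?_⟩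
      rcases hep with h | h
      · exact Or.inl (by rw [h]; exact hv₀)
      · exact Or.inr (by rw [h]; exact hv₀)
    · rw [Finset.mem_filter] at he ⊢
      exact ⟨he.1, he.2.imp (fun h => S.erase_subset v₀ h) (fun h => S.erase_subset v₀ h)⟩
  have h3 := Finset.card_le_card h2
  rw [Finset.card_insert_of_notMem h1] at h3
  have h4 : (S.erase v₀).card + 1 = S.card := Finset.card_erase_add_one hv₀
  omega

lemma aux_treeBound (T : Finset G.E)
    (hT : ∀ v u : G.V, Relation.ReflTransGen (G.AdjIn T) v u) :
    ∀ S : Finset G.V, S ≠ Finset.univ →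
      S.card ≤ (T.filter fun e => G.s e ∈ S ∨ G.t e ∈ S).card := by
  intro S
  induction S using Finset.strongInduction with
  | _ S ih =>
    intro hS
    rcases S.eq_empty_or_nonempty with rfl | ⟨v, hv⟩
    · simp
    · obtain ⟨u, hu⟩ : ∃ u, u ∉ S := by
        by_contra h; push_neg at h; exact hS (Finset.eq_univ_iff_forall.mpr h)
      obtain ⟨e₀, he₀T, he₀⟩ := aux_crossing G T S (hT v u) hv hu
      rcases he₀ with ⟨hs₀, ht₀⟩ | ⟨ht₀, hs₀⟩
      · have herase : S.erase (G.s e₀) ⊂ S := Finset.erase_ssubset hs₀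
        have hne' : S.erase (G.s e₀) ≠ Finset.univ := by
          intro h
          exact hu (S.erase_subset _ (h ▸ Finset.mem_univ u))
        exact aux_step G T S e₀ he₀T (G.s e₀) hs₀ (Or.inl rfl)
          (Finset.notMem_erase _ _)
          (fun h => ht₀ (S.erase_subset _ h))
          (ih _ herase hne')
      · have herase : S.erase (G.t e₀) ⊂ S := Finset.erase_ssubset ht₀
        have hne' : S.erase (G.t e₀) ≠ Finset.univ := by
          intro h
          exact hu (S.erase_subset _ (h ▸ Finset.mem_univ u))
        exact aux_step G T S e₀ he₀T (G.t e₀) ht₀ (Or.inr rfl)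
          (fun h => hs₀ (S.erase_subset _ h))
          (Finset.notMem_erase _ _)
          (ih _ herase hne')

end Aux

/-- Every break divisor on a stable weight-zero graph of genus `g ≥ 2` (no legs)
is semistable for the canonical stability condition
`φ^can(v) = g(val(v)-2)/(2g-2)`: for every `S ⊆ V(G)`,
`D(S) ≤ φ^can(S) + |E(S,Sᶜ)|/2`. -/
theorem stmt16 (g : ℕ) (hg : 2 ≤ g) (G : MGraph)
    (hL : IsEmpty G.L) (hw : ∀ v, G.w v = 0)
    (hconn : G.Connected) (hgen : G.genus = (g : ℤ))
    (hval : ∀ v, 3 ≤ G.val v)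
    (D : G.V → ℤ) (hD : G.IsBreakDivisor D) :
    ∀ S : Finset G.V, (G.divSum D S : ℝ) ≤
      (∑ v ∈ S, (g : ℝ) * ((G.val v : ℝ) - 2) / (2 * (g : ℝ) - 2))
        + ((G.cut S).card : ℝ) / 2 := by
  obtain ⟨T, φ, ⟨hTconn, hTcard⟩, hφ, hDdef⟩ := hD
  have hgE : (Fintype.card G.E : ℤ) - (Fintype.card G.V : ℤ) + 1 = (g : ℤ) := by
    have h := hgen
    unfold MGraph.genus at h
    simpa [hw] using h
  have hgR : (2:ℝ) ≤ (g:ℝ) := by exact_mod_cast hg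
  have hdpos : (0:ℝ) < 2*(g:ℝ) - 2 := by linarith
  intro S
  -- Step A : divSum D S is the number of non-tree edges with φ e ∈ S
  have hA : G.divSum D S =
      ((((Finset.univ \ T).filter fun e => φ e ∈ S).card : ℤ)) := by
    unfold MGraph.divSum
    have h0 : ∀ v ∈ S, D v = (((Finset.univ \ T).filter fun e => φ e = v).card : ℤ) := by
      intro v _; rw [hDdef v, hw v]; simp
    rw [Finset.sum_congr rfl h0, ← Nat.cast_sum]
    congr 1
    simp only [Finset.card_filter]
    rw [Finset.sum_comm]
    exact Finset.sum_congr rfl fun e _ => Finset.sum_ite_eq S (φ e) (fun _ => 1)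
  -- Step E : handshake for S
  have hE : ∑ v ∈ S, G.val v =
      2 * (Finset.univ.filter fun e => G.s e ∈ S ∧ G.t e ∈ S).card + (G.cut S).card := by
    have hnl : ∀ v, G.nLegs v = 0 := by
      intro v; unfold MGraph.nLegs; simp [Finset.univ_eq_empty]
    have h1 : ∀ v ∈ S, G.val v = G.valE v := by
      intro v _; simp [MGraph.val, hnl]
    rw [Finset.sum_congr rfl h1]
    unfold MGraph.valE MGraph.cut
    rw [Finset.sum_comm]
    simp only [Finset.card_filter]
    rw [Finset.mul_sum, ← Finset.sum_add_distrib]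
    refine Finset.sum_congr rfl fun e _ => ?_
    rw [Finset.sum_add_distrib, Finset.sum_ite_eq S (G.s e) (fun _ => 1),
      Finset.sum_ite_eq S (G.t e) (fun _ => 1)]
    by_cases hs : G.s e ∈ S <;> by_cases ht : G.t e ∈ S <;> simp [hs, ht]
  -- Step C/D : splitting the set of edges meeting S
  have hc1 : ((Finset.univ \ T).filter fun e => G.s e ∈ S ∨ G.t e ∈ S).card
      + (T.filter fun e => G.s e ∈ S ∨ G.t e ∈ S).card
      = (Finset.univ.filter fun e => G.s e ∈ S ∨ G.t e ∈ S).card := by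
    rw [← Finset.card_union_of_disjoint (Finset.disjoint_filter_filter Finset.sdiff_disjoint),
      ← Finset.filter_union, Finset.sdiff_union_of_subset (Finset.subset_univ T)]
  have hc2 : (Finset.univ.filter fun e => G.s e ∈ S ∨ G.t e ∈ S).card
      = (Finset.univ.filter fun e => G.s e ∈ S ∧ G.t e ∈ S).card + (G.cut S).card := by
    unfold MGraph.cut
    rw [← Finset.card_union_of_disjoint (Finset.disjoint_filter.mpr
      (fun e _ h1 h2 => by tauto)), ← Finset.filter_or]
    congr 1
    ext e
    simp only [Finset.mem_filter, Finset.mem_univ, true_and]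
    tauto
  by_cases hSu : S = Finset.univ
  · -- S = V : equality, both sides equal g
    subst hSu
    have hcut : G.cut Finset.univ = ∅ := by
      unfold MGraph.cut; ext e; simp
    have hcards : (Finset.univ \ T).card + T.card = Fintype.card G.E := by
      rw [Finset.card_sdiff_add_card, Finset.union_eq_left.mpr (Finset.subset_univ T),
        Finset.card_univ]
    have hdiv : G.divSum D Finset.univ = (g : ℤ) := by
      rw [hA]
      have hfe : ((Finset.univ \ T).filter fun e => φ e ∈ Finset.univ)
          = Finset.univ \ T := by
        apply Finset.filter_true_of_mem; intro e _; exact Finset.mem_univ _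
      rw [hfe]
      omega
    have hsum : ∑ v : G.V, G.val v = 2 * Fintype.card G.E := by
      have hm : (Finset.univ.filter fun e => G.s e ∈ (Finset.univ : Finset G.V)
          ∧ G.t e ∈ (Finset.univ : Finset G.V)) = Finset.univ := by
        apply Finset.filter_true_of_mem; intro e _; simp
      rw [hE, hm, hcut]
      simp [Finset.card_univ]
    rw [hcut]
    simp only [Finset.card_empty, Nat.cast_zero, zero_div, add_zero]
    rw [← Finset.sum_div, ← Finset.mul_sum]
    have hss : ∑ v : G.V, ((G.val v : ℝ) - 2) = 2*(g:ℝ) - 2 := by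
      rw [Finset.sum_sub_distrib, Finset.sum_const, Finset.card_univ]
      have h1 : (∑ v : G.V, (G.val v:ℝ)) = 2 * (Fintype.card G.E : ℝ) := by
        exact_mod_cast hsum
      have h2 : (Fintype.card G.E : ℝ) - (Fintype.card G.V : ℝ) + 1 = (g : ℝ) := by
        exact_mod_cast hgE
      rw [h1]
      simp only [nsmul_eq_mul]
      push_cast
      linarith
    rw [hss, mul_div_assoc, div_self (ne_of_gt hdpos), mul_one, hdiv]
    push_cast
    exact le_refl _
  · -- S ≠ V
    have hF := aux_treeBound G T hTconn S hSu
    have hB : (((Finset.univ \ T).filter fun e => φ e ∈ S).card)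
        ≤ ((Finset.univ \ T).filter fun e => G.s e ∈ S ∨ G.t e ∈ S).card := by
      apply Finset.card_le_card
      intro e he
      rw [Finset.mem_filter] at he ⊢
      refine ⟨he.1, ?_⟩
      have heT : e ∉ T := (Finset.mem_sdiff.mp he.1).2
      rcases hφ e heT with h | h
      · exact Or.inl (by rw [← h]; exact he.2)
      · exact Or.inr (by rw [← h]; exact he.2)
    set m := (Finset.univ.filter fun e => G.s e ∈ S ∧ G.t e ∈ S).card with hm
    set c := (G.cut S).card with hc
    have hDm : (G.divSum D S : ℝ) ≤ (m : ℝ) + c - S.card := by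
      have hz : G.divSum D S ≤ (m : ℤ) + c - S.card := by
        rw [hA]; omega
      calc (G.divSum D S : ℝ) ≤ (((m : ℤ) + c - S.card : ℤ) : ℝ) := by exact_mod_cast hz
        _ = (m : ℝ) + c - S.card := by push_cast; ring
    have hEz : ∑ v ∈ S, (G.val v : ℝ) = 2*(m:ℝ) + c := by exact_mod_cast hE
    have hsumS : ∑ v ∈ S, ((G.val v : ℝ) - 2) = 2*(m:ℝ) + c - 2*S.card := by
      rw [Finset.sum_sub_distrib, Finset.sum_const, hEz]
      simp only [nsmul_eq_mul]
      push_cast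
      ring
    have hN : (0:ℝ) ≤ 2*(m:ℝ) + c - 2*S.card := by
      have h1 : (S.card:ℝ) ≤ ∑ v ∈ S, ((G.val v:ℝ) - 2) := by
        calc (S.card:ℝ) = ∑ _v ∈ S, (1:ℝ) := by simp
          _ ≤ _ := Finset.sum_le_sum fun v _ => by
              have h3 := hval v
              have h4 : (3:ℝ) ≤ (G.val v : ℝ) := by exact_mod_cast h3
              linarith
      rw [hsumS] at h1
      have h5 : (0:ℝ) ≤ (S.card : ℝ) := Nat.cast_nonneg _
      linarith
    rw [← Finset.sum_div, ← Finset.mul_sum, hsumS]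
    have hkey : (2*(m:ℝ) + c - 2*S.card)/2
        ≤ (g:ℝ)*(2*(m:ℝ) + c - 2*S.card)/(2*(g:ℝ)-2) := by
      rw [div_le_div_iff₀ (by norm_num) hdpos]
      nlinarith [hN, hgR]
    linarith [hDm, hkey]
end
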